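/- Generalized parallel composition for RDP: let F = {S₁,…,S_k} be a family of subsets of the record domain with maximum degree z, and let M₁,…,M_k each satisfy (α,ε)-RDP. Then M(x) = (M₁(x ∩ S₁), …, M_k(x ∩ S_k)), with independent component mechanisms, satisfies (α, z·ε)-RDP. -/

import Mathlib

open Real

/-- Two multisets are neighbors if their symmetric difference has size 1. -/
def Neighbor {I : Type*} [DecidableEq I] (x x' : Multiset I) : Prop :=
  ((x - x') + (x' - x)).card = 1

/-- Rényi divergence of order `α` between two (sub)distributions given by
their mass functions. -/
noncomputable def renyiDiv {Y : Type*} (α : ℝ) (P Q : Y → ENNReal) : ℝ :=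
  (α - 1)⁻¹ * Real.log (∑' y, (P y).toReal ^ α * (Q y).toReal ^ (1 - α))

/-- (α, ε)-Rényi differential privacy. -/
def RDP {I : Type*} [DecidableEq I] {Y : Type*}
    (M : Multiset I → PMF Y) (α ε : ℝ) : Prop :=
  ∀ x x', Neighbor x x' → renyiDiv α (M x) (M x') ≤ ε

lemma tsum_pi_prod : ∀ {k : ℕ} {Y : Fin k → Type*} (g : ∀ i, Y i → ENNReal),
    ∑' y : ∀ i, Y i, ∏ i, g i (y i) = ∏ i, ∑' y, g i y := by
  intro k
  induction k with
  | zero =>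
    intro Y g
    simp only [Finset.univ_eq_empty, Finset.prod_empty]
    rw [tsum_eq_single (α := ENNReal) (fun i : Fin 0 => i.elim0)
      (fun y hy => absurd (Subsingleton.elim y _) hy)]
  | succ n ih =>
    intro Y g
    rw [← (Fin.consEquiv Y).tsum_eq, Fin.prod_univ_succ, ENNReal.tsum_prod']
    simp only [Fin.consEquiv_apply]
    calc ∑' (a : Y 0) (b : ∀ i : Fin n, Y i.succ), ∏ i, g i (Fin.cons a b i)
        = ∑' (a : Y 0) (b : ∀ i : Fin n, Y i.succ),
            g 0 a * ∏ i : Fin n, g i.succ (b i) := by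
          congr 1; funext a; congr 1; funext b
          rw [Fin.prod_univ_succ]; simp
      _ = (∑' a, g 0 a) * ∑' (b : ∀ i : Fin n, Y i.succ), ∏ i : Fin n, g i.succ (b i) := by
          rw [← ENNReal.tsum_mul_right]
          congr 1; funext a
          rw [ENNReal.tsum_mul_left]
      _ = (∑' a, g 0 a) * ∏ i : Fin n, ∑' y, g i.succ y := by rw [ih]

lemma neighbor_exists {I : Type*} [DecidableEq I] {x x' : Multiset I}
    (h : Neighbor x x') : ∃ r, x = x' + {r} ∨ x' = x + {r} := by
  unfold Neighbor at h
  rw [Multiset.card_add] at h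
  rcases Nat.add_eq_one_iff.mp h with ⟨h1, h2⟩ | ⟨h1, h2⟩
  · obtain ⟨r, hr⟩ := Multiset.card_eq_one.mp h2
    refine ⟨r, Or.inr ?_⟩
    have hle : x ≤ x' := tsub_eq_zero_iff_le.mp (Multiset.card_eq_zero.mp h1)
    have := tsub_add_cancel_of_le hle
    rw [hr] at this
    rw [← this, add_comm]
  · obtain ⟨r, hr⟩ := Multiset.card_eq_one.mp h1
    refine ⟨r, Or.inl ?_⟩
    have hle : x' ≤ x := tsub_eq_zero_iff_le.mp (Multiset.card_eq_zero.mp h2)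
    have := tsub_add_cancel_of_le hle
    rw [hr] at this
    rw [← this, add_comm]

lemma neighbor_add_singleton {I : Type*} [DecidableEq I] (a : Multiset I) (r : I) :
    Neighbor a (a + {r}) := by
  unfold Neighbor
  have h1 : a - (a + {r}) = 0 := tsub_eq_zero_iff_le.mpr (Multiset.le_add_right _ _)
  have h2 : a + {r} - a = {r} := by rw [add_comm]; exact add_tsub_cancel_right _ _
  rw [h1, h2]; rfl

lemma neighbor_symm {I : Type*} [DecidableEq I] {x x' : Multiset I}
    (h : Neighbor x x') : Neighbor x' x := by
  unfold Neighbor at h ⊢; rw [add_comm]; exact h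

lemma log_le_of_le_exp {A c : ℝ} (hA : 0 ≤ A) (hc : 0 ≤ c) (h : A ≤ Real.exp c) :
    Real.log A ≤ c := by
  rcases eq_or_lt_of_le hA with h0 | h0
  · rw [← h0, Real.log_zero]; exact hc
  · exact (Real.log_le_iff_le_exp h0).mpr h

lemma le_exp_of_log_le {A c : ℝ} (hA : 0 ≤ A) (h : Real.log A ≤ c) :
    A ≤ Real.exp c := by
  rcases eq_or_lt_of_le hA with h0 | h0
  · rw [← h0]; exact (Real.exp_pos c).le
  · calc A = Real.exp (Real.log A) := (Real.exp_log h0).symm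
      _ ≤ Real.exp c := Real.exp_le_exp.mpr h

lemma pmf_rpow_self (α : ℝ) (hα : 1 < α) {Y : Type*} (p : PMF Y) (y : Y) :
    (p y).toReal ^ α * (p y).toReal ^ (1 - α) = (p y).toReal := by
  rcases eq_or_lt_of_le (ENNReal.toReal_nonneg (a := p y)) with h0 | h0
  · rw [← h0, Real.zero_rpow (by positivity : (0:ℝ) < α).ne', zero_mul]
  · rw [← Real.rpow_add h0]; norm_num

lemma pmf_toReal_tsum {Y : Type*} (p : PMF Y) : ∑' y, (p y).toReal = 1 := by
  have h := ENNReal.tsum_toReal_eq (f := fun y => p y) (fun y => PMF.apply_ne_top p y)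
  rw [p.tsum_coe] at h
  simpa using h.symm

lemma renyiDiv_self {Y : Type*} (α : ℝ) (hα : 1 < α) (p : PMF Y) :
    renyiDiv α p p = 0 := by
  unfold renyiDiv
  have : ∀ y, (p y).toReal ^ α * (p y).toReal ^ (1 - α) = (p y).toReal :=
    pmf_rpow_self α hα p
  simp only [this, pmf_toReal_tsum, Real.log_one, mul_zero]

/-- Rényi divergence of an independent product is at most the sum of the
componentwise bounds (with the junk-value conventions of `renyiDiv`). -/
lemma renyiDiv_prod_le {k : ℕ} {Y : Fin k → Type*} (P Q : ∀ i, PMF (Y i))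
    (α : ℝ) (hα : 1 < α) (E : Fin k → ℝ) (hEnn : ∀ i, 0 ≤ E i)
    (hPQ : ∀ i, renyiDiv α (P i) (Q i) ≤ E i) :
    renyiDiv α (fun y : ∀ i, Y i => ∏ i, P i (y i))
      (fun y : ∀ i, Y i => ∏ i, Q i (y i)) ≤ ∑ i, E i := by
  have hα1 : (0:ℝ) < α - 1 := sub_pos.mpr hα
  unfold renyiDiv at hPQ ⊢
  set g : ∀ i, Y i → ℝ := fun i y => (P i y).toReal ^ α * (Q i y).toReal ^ (1 - α) with hg
  have hgnn : ∀ i y, 0 ≤ g i y := fun i y =>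
    mul_nonneg (Real.rpow_nonneg ENNReal.toReal_nonneg _)
      (Real.rpow_nonneg ENNReal.toReal_nonneg _)
  set f : (∀ i, Y i) → ℝ := fun y => ∏ i, g i (y i) with hf
  have hfnn : ∀ y, 0 ≤ f y := fun y => Finset.prod_nonneg (fun i _ => hgnn i (y i))
  have hrw : ∀ y : ∀ i, Y i,
      (∏ i, P i (y i)).toReal ^ α * (∏ i, Q i (y i)).toReal ^ (1 - α) = f y := by
    intro y
    rw [ENNReal.toReal_prod, ENNReal.toReal_prod,
      ← Real.finset_prod_rpow _ _ (fun i _ => ENNReal.toReal_nonneg) α,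
      ← Real.finset_prod_rpow _ _ (fun i _ => ENNReal.toReal_nonneg) (1 - α),
      ← Finset.prod_mul_distrib]
  set G : ∀ i, Y i → ENNReal := fun i y => ENNReal.ofReal (g i y) with hG
  set T : Fin k → ENNReal := fun i => ∑' y, G i y with hT
  have htot : ∑' y, ENNReal.ofReal (f y) = ∏ i, T i := by
    rw [← tsum_pi_prod G]
    congr 1; funext y
    exact ENNReal.ofReal_prod_of_nonneg (fun i _ => hgnn i (y i))
  have hEsumnn : (0:ℝ) ≤ ∑ i, E i := Finset.sum_nonneg (fun i _ => hEnn i)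
  have hbound : ∀ i, T i ≠ ⊤ → (T i).toReal ≤ Real.exp ((α - 1) * E i) := by
    intro i hfin
    have hA : (T i).toReal = ∑' y, g i y := by
      rw [hT, ENNReal.tsum_toReal_eq (fun _ => ENNReal.ofReal_ne_top)]
      simp only [hG, ENNReal.toReal_ofReal (hgnn i _)]
    have hAnn : 0 ≤ ∑' y, g i y := tsum_nonneg (fun y => hgnn i y)
    have hlog : Real.log (∑' y, g i y) ≤ (α - 1) * E i := by
      have h2 := mul_le_mul_of_nonneg_left (hPQ i) hα1.le
      rw [← mul_assoc, mul_inv_cancel₀ hα1.ne', one_mul] at h2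
      exact h2
    rw [hA]
    exact le_exp_of_log_le hAnn hlog
  have hgoal : Real.log (∑' y, f y) ≤ (α - 1) * ∑ i, E i := by
    have hz0 : (0:ℝ) ≤ (α - 1) * ∑ i, E i := mul_nonneg hα1.le hEsumnn
    by_cases hfin : ∀ i, T i ≠ ⊤
    · have hprodfin : ∏ i, T i ≠ ⊤ := (ENNReal.prod_lt_top (fun i _ => (hfin i).lt_top)).ne
      have hfeq : ∑' y, f y = ∏ i, (T i).toReal := by
        have h1 : ∑' y, f y = (∑' y, ENNReal.ofReal (f y)).toReal := by
          rw [ENNReal.tsum_toReal_eq (fun _ => ENNReal.ofReal_ne_top)]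
          congr 1; funext y; rw [ENNReal.toReal_ofReal (hfnn y)]
        rw [h1, htot, ENNReal.toReal_prod]
      rw [hfeq]
      refine log_le_of_le_exp (Finset.prod_nonneg (fun i _ => ENNReal.toReal_nonneg)) hz0 ?_
      calc ∏ i, (T i).toReal ≤ ∏ i, Real.exp ((α - 1) * E i) :=
            Finset.prod_le_prod (fun i _ => ENNReal.toReal_nonneg)
              (fun i _ => hbound i (hfin i))
        _ = Real.exp (∑ i, (α - 1) * E i) := by rw [Real.exp_sum]
        _ = Real.exp ((α - 1) * ∑ i, E i) := by rw [← Finset.mul_sum]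
    · push_neg at hfin
      obtain ⟨i, hi⟩ := hfin
      have hzero : ∑' y, f y = 0 := by
        by_cases h2 : ∏ j, T j = ⊤
        · refine tsum_eq_zero_of_not_summable (fun hs => ?_)
          have h3 := ENNReal.ofReal_tsum_of_nonneg hfnn hs
          rw [htot, h2] at h3
          exact ENNReal.ofReal_ne_top h3
        · have hprod0 : ∏ j, T j = 0 := by
            by_contra h0
            apply h2
            rw [← Finset.prod_erase_mul _ _ (Finset.mem_univ i), hi]
            rw [ENNReal.mul_top]
            intro hrest
            apply h0
            rw [← Finset.prod_erase_mul _ _ (Finset.mem_univ i), hrest, zero_mul]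
          have h4 : ∑' y, ENNReal.ofReal (f y) = 0 := by rw [htot, hprod0]
          have h5 : ∀ y, f y = 0 := fun y =>
            le_antisymm
              (by simpa [ENNReal.ofReal_eq_zero] using (ENNReal.tsum_eq_zero.mp h4) y)
              (hfnn y)
          simp [h5]
      rw [hzero, Real.log_zero]
      exact hz0
  simp only [hrw]
  calc (α - 1)⁻¹ * Real.log (∑' y, f y) ≤ (α - 1)⁻¹ * ((α - 1) * ∑ i, E i) :=
        mul_le_mul_of_nonneg_left hgoal (inv_nonneg.mpr hα1.le)
    _ = ∑ i, E i := by rw [← mul_assoc, inv_mul_cancel₀ hα1.ne', one_mul]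

theorem generalized_parallel_composition_RDP
    {I : Type*} [DecidableEq I] {k : ℕ} {Y : Fin k → Type*}
    (S : Fin k → Set I) [∀ i, DecidablePred (· ∈ S i)]
    (z : ℕ) (hz : ∀ r : I, (Finset.univ.filter (fun i => r ∈ S i)).card ≤ z)
    (M : ∀ i, Multiset I → PMF (Y i)) (α ε : ℝ) (hα : 1 < α) (hε : 0 ≤ ε)
    (hM : ∀ i, RDP (M i) α ε)
    (x x' : Multiset I) (hxx' : Neighbor x x') :
    renyiDiv α
        (fun y : ∀ i, Y i => ∏ i, (M i (x.filter (· ∈ S i))) (y i))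
        (fun y : ∀ i, Y i => ∏ i, (M i (x'.filter (· ∈ S i))) (y i)) ≤
      z * ε := by
  obtain ⟨r, hcase⟩ := neighbor_exists hxx'
  have keq : ∀ i, r ∉ S i → x.filter (· ∈ S i) = x'.filter (· ∈ S i) := by
    intro i hi
    rcases hcase with hc | hc <;> rw [hc, Multiset.filter_add] <;>
      simp [Multiset.filter_singleton, hi]
  have kne : ∀ i, r ∈ S i → Neighbor (x.filter (· ∈ S i)) (x'.filter (· ∈ S i)) := by
    intro i hi
    rcases hcase with hc | hc
    · rw [hc, Multiset.filter_add, Multiset.filter_singleton, if_pos hi]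
      exact neighbor_symm (neighbor_add_singleton _ r)
    · rw [hc, Multiset.filter_add, Multiset.filter_singleton, if_pos hi]
      exact neighbor_add_singleton _ r
  have main := renyiDiv_prod_le
    (fun i => M i (x.filter (· ∈ S i))) (fun i => M i (x'.filter (· ∈ S i)))
    α hα (fun i => if r ∈ S i then ε else 0)
    (fun i => by split <;> simp [hε])
    (fun i => by
      by_cases hi : r ∈ S i
      · rw [if_pos hi]; exact hM i _ _ (kne i hi)
      · rw [if_neg hi, keq i hi, renyiDiv_self α hα])
  refine main.trans ?_
  have hsum : ∑ i, (if r ∈ S i then ε else 0) =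
      ((Finset.univ.filter (fun i => r ∈ S i)).card : ℝ) * ε := by
    rw [Finset.sum_ite, Finset.sum_const, Finset.sum_const_zero, add_zero, nsmul_eq_mul]
  rw [hsum]
  exact mul_le_mul_of_nonneg_right (by exact_mod_cast hz r) hε
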